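/- Suppose X and Y are singular formal vector fields on (C^n,0) such that Exp(X) = Exp(Y) = F, D_0X = D_0Y, and Y belongs to the Lie algebra of the pro-algebraic closure of ⟨F⟩. Then X = Y. -/

import Mathlib

open MvPowerSeries

noncomputable section

/-- Formal power series in `n` variables over `ℂ`. -/
abbrev PS (n : ℕ) := MvPowerSeries (Fin n) ℂ

/-- A formal diffeomorphism of `(ℂ^n,0)`, modelled as a `ℂ`-algebra automorphism of
`ℂ[[x₁,…,xₙ]]` (acting by composition `g ↦ g ∘ F`). -/
abbrev FormalDiffeo (n : ℕ) := PS n ≃ₐ[ℂ] PS n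

/-- A formal (singular) vector field on `(ℂ^n,0)`: a derivation of `ℂ[[x₁,…,xₙ]]`. -/
abbrev FormalVF (n : ℕ) := Derivation ℂ (PS n) (PS n)

/-- The space of `k`-jets: truncated coefficient data of the components of a diffeomorphism. -/
abbrev JetSpace (n k : ℕ) :=
  Fin n → {d : Fin n →₀ ℕ // (d.sum fun _ e => e) ≤ k} → ℂ

/-- The `k`-jet of a formal diffeomorphism. -/
def jetOf (n k : ℕ) (F : FormalDiffeo n) : JetSpace n k :=
  fun i d => coeff (R := ℂ) d.1 (F (X i))

/-- Polynomial functions on the jet space: the algebra generated by coordinates. -/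
def polyFuns (n k : ℕ) : Subalgebra ℂ (JetSpace n k → ℂ) :=
  Algebra.adjoin ℂ {φ | ∃ i d, φ = fun J => J i d}

/-- The Zariski topology on the jet space. -/
def zTop (n k : ℕ) : TopologicalSpace (JetSpace n k) :=
  .generateFrom {U | ∃ φ ∈ polyFuns n k, U = {x | φ x ≠ 0}}

/-- The pro-algebraic (Zariski) closure of a set of formal diffeomorphisms:
those whose `k`-jet lies, for every `k`, in the Zariski closure of the set of `k`-jets. -/
def proAlgClosure {n : ℕ} (G : Set (FormalDiffeo n)) : Set (FormalDiffeo n) :=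
  {F | ∀ k, jetOf n k F ∈ @closure _ (zTop n k) (jetOf n k '' G)}

/-- The connected component of the identity of the pro-algebraic closure:
those diffeomorphisms whose `k`-jet lies, for every `k`, in the Zariski-connected component
of the jet of the identity inside the Zariski closure of the `k`-jets. -/
def proAlgIdComp {n : ℕ} (G : Set (FormalDiffeo n)) : Set (FormalDiffeo n) :=
  {F | ∀ k, jetOf n k F ∈
    @connectedComponentIn _ (zTop n k)
      (@closure _ (zTop n k) (jetOf n k '' G)) (jetOf n k 1)}

/-- `j`-th iterate of a derivation, as a map. -/
def derivPow {n : ℕ} (Y : FormalVF n) (j : ℕ) (g : PS n) : PS n :=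
  ((Y.toLinearMap : PS n →ₗ[ℂ] PS n) ^ j) g

/-- The time-one flow `Exp(Y)` applied to `g`, namely `∑_j Y^j(g)/j!`, where the
(countable) sum of each coefficient is taken in `ℂ`. -/
def expSeries {n : ℕ} (Y : FormalVF n) (g : PS n) : PS n :=
  fun d => ∑' j : ℕ, ((j.factorial : ℂ))⁻¹ * coeff (R := ℂ) d (derivPow Y j g)

/-- `F` is the time-one flow (exponential) of the formal vector field `Y`. -/
def IsExpOf {n : ℕ} (F : FormalDiffeo n) (Y : FormalVF n) : Prop :=
  ∀ g : PS n, F g = expSeries Y g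

/-- A formal vector field is singular if it vanishes at the origin. -/
def IsSingularVF {n : ℕ} (Y : FormalVF n) : Prop :=
  ∀ i : Fin n, constantCoeff (σ := Fin n) (R := ℂ) (Y (X i)) = 0

/-- `Y` belongs to the Lie algebra of the pro-algebraic closure of `G`
(characterized by all its time-`t` flows lying in the closure). -/
def InLieAlgOf {n : ℕ} (G : Set (FormalDiffeo n)) (Y : FormalVF n) : Prop :=
  ∀ t : ℂ, ∃ F : FormalDiffeo n, F ∈ proAlgClosure G ∧ IsExpOf F (t • Y)

/-- `Y` is an infinitesimal generator of `F`. -/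
def IsInfGen {n : ℕ} (Y : FormalVF n) (F : FormalDiffeo n) : Prop :=
  IsSingularVF Y ∧ IsExpOf F Y ∧ InLieAlgOf (Subgroup.zpowers F : Set (FormalDiffeo n)) Y

/-- The linear part `D₀F` of a formal diffeomorphism. -/
def linPartD {n : ℕ} (F : FormalDiffeo n) : Matrix (Fin n) (Fin n) ℂ :=
  Matrix.of fun i j => coeff (R := ℂ) (Finsupp.single j 1) (F (X i))

/-- The linear part `D₀Y` of a formal vector field. -/
def linPartV {n : ℕ} (Y : FormalVF n) : Matrix (Fin n) (Fin n) ℂ :=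
  Matrix.of fun i j => coeff (R := ℂ) (Finsupp.single j 1) (Y (X i))

/-- Substitution of a tuple of one-variable power series (a formal curve) into a
multivariate power series. -/
def substCurve {n : ℕ} (γ : Fin n → PowerSeries ℂ) (f : PS n) : PowerSeries ℂ :=
  PowerSeries.mk fun m =>
    ∑' e : (Fin n →₀ ℕ), coeff (R := ℂ) e f * PowerSeries.coeff (R := ℂ) m (∏ i, (γ i) ^ (e i))

/-- Substitution (composition) of one-variable power series: `g ∘ θ`. -/
def substPS (θ g : PowerSeries ℂ) : PowerSeries ℂ :=
  PowerSeries.mk fun m =>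
    ∑' e : ℕ, PowerSeries.coeff (R := ℂ) e g * PowerSeries.coeff (R := ℂ) m (θ ^ e)

/-- Substitution of a tuple of `n`-variable power series into an `n`-variable power series. -/
def substMv {n : ℕ} (σ : Fin n → PS n) (f : PS n) : PS n :=
  fun d => ∑' e : (Fin n →₀ ℕ), coeff (R := ℂ) e f * coeff (R := ℂ) d (∏ i, (σ i) ^ (e i))

/-- `γ` (with `θ`) is a formal invariant curve of the formal diffeomorphism `F`:
`γ` is a nonzero tuple of power series without constant term, `θ` is a formal
diffeomorphism in one variable, and `F ∘ γ = γ ∘ θ`. -/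
def IsInvariantCurve {n : ℕ} (F : FormalDiffeo n) (γ : Fin n → PowerSeries ℂ)
    (θ : PowerSeries ℂ) : Prop :=
  γ ≠ 0 ∧ (∀ i, PowerSeries.constantCoeff (R := ℂ) (γ i) = 0) ∧
    PowerSeries.constantCoeff (R := ℂ) θ = 0 ∧ PowerSeries.coeff (R := ℂ) 1 θ ≠ 0 ∧
    ∀ i, substCurve γ (F (X i)) = substPS θ (γ i)

/-!
On `k`-jets a singular vector field `D` acts by a finite matrix `jetOp k D`, and `Exp D` acts by
its exponential. Commuting with `X` is a polynomial condition on the jets of a diffeomorphism, so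
the stabilizer of `X` is pro-algebraic; it contains `F = Exp X`, hence the pro-algebraic closure
of `⟨F⟩`, hence every flow `Exp (t Y)`. Differentiating at `t = 0`, the jet matrices `A` of `X`
and `B` of `Y` commute, so `exp (A - B) = exp A * (exp B)⁻¹ = 1`. As `D₀X = D₀Y`, the field
`X - Y` raises the order of vanishing, so `A - B` is nilpotent, and a nilpotent matrix whose
exponential is `1` vanishes. This holds for every `k`, so `X = Y`.
-/

namespace MvPowerSeries

def orderIdeal (σ R : Type*) [CommSemiring R] (k : ℕ) : Ideal (MvPowerSeries σ R) where
  carrier := {f | (k : ℕ∞) ≤ f.order}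
  zero_mem' := by simp
  add_mem' hf hg := le_trans (le_min hf hg) min_order_le_add
  smul_mem' c _ hf := le_trans (le_add_left hf) le_order_mul

variable {σ R : Type*}

section Semiring

variable [CommSemiring R] {k : ℕ} {f g : MvPowerSeries σ R}

theorem mem_orderIdeal : f ∈ orderIdeal σ R k ↔ (k : ℕ∞) ≤ f.order := Iff.rfl

theorem mem_orderIdeal_iff : f ∈ orderIdeal σ R k ↔ ∀ d, Finsupp.degree d < k → coeff d f = 0 :=
  ⟨fun hf _ hd => coeff_of_lt_order (lt_of_lt_of_le (by exact_mod_cast hd) hf),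
    fun h => le_order fun d hd => h d (by exact_mod_cast hd)⟩

theorem orderIdeal_zero : orderIdeal σ R 0 = ⊤ :=
  eq_top_iff.mpr fun f _ => mem_orderIdeal.mpr (by simp)

theorem orderIdeal_antitone : Antitone (orderIdeal σ R) :=
  fun _ _ h _ hf => mem_orderIdeal.mpr (le_trans (by exact_mod_cast h) (mem_orderIdeal.mp hf))

theorem mul_mem_orderIdeal {a b : ℕ} (hf : f ∈ orderIdeal σ R a) (hg : g ∈ orderIdeal σ R b) :
    f * g ∈ orderIdeal σ R (a + b) :=
  le_trans (by push_cast; exact add_le_add hf hg) le_order_mul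

theorem X_mem_orderIdeal_one (i : σ) : (X i : MvPowerSeries σ R) ∈ orderIdeal σ R 1 := by
  rw [mem_orderIdeal_iff]
  intro d hd
  rw [Nat.lt_one_iff, Finsupp.degree_eq_zero_iff] at hd
  simp [hd]

theorem mem_orderIdeal_one_iff : f ∈ orderIdeal σ R 1 ↔ constantCoeff f = 0 := by
  rw [mem_orderIdeal, Nat.cast_one, one_le_order_iff_constCoeff_eq_zero]

theorem monomial_one_eq_prod (e : σ →₀ ℕ) :
    (monomial e (1 : R)) = e.prod fun i m => (X i : MvPowerSeries σ R) ^ m := by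
  rw [← MvPolynomial.coe_monomial, MvPolynomial.monomial_eq, map_one, one_mul]
  have := map_finsuppProd (MvPolynomial.coeToMvPowerSeries.ringHom (σ := σ) (R := R)) e
    fun i m => MvPolynomial.X i ^ m
  simpa using this

theorem exists_eq_C_add_sum_X_mul [LinearOrder σ] [Fintype σ] {a : ℕ}
    (hf : f ∈ orderIdeal σ R a) :
    ∃ g : σ → MvPowerSeries σ R,
      (∀ i, g i ∈ orderIdeal σ R (a - 1)) ∧ f = C (constantCoeff f) + ∑ i, X i * g i := by
  classical
  -- `g i` collects the monomials whose first variable is `i`, divided by `X i`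
  set g : σ → MvPowerSeries σ R := fun i e =>
    if (e + Finsupp.single i 1).support.min = (i : WithTop σ) then
      coeff (e + Finsupp.single i 1) f
    else 0
  have coeff_g (i : σ) (e : σ →₀ ℕ) : coeff e (g i) =
      if (e + Finsupp.single i 1).support.min = (i : WithTop σ) then
        coeff (e + Finsupp.single i 1) f
      else 0 :=
    rfl
  refine ⟨g, fun i => mem_orderIdeal_iff.mpr fun e he => ?_, ext fun d => ?_⟩
  · rw [coeff_g]
    split_ifs
    · exact mem_orderIdeal_iff.mp hf _ (by rw [map_add, Finsupp.degree_single]; omega)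
    · rfl
  rcases eq_or_ne d 0 with rfl | hd
  · simp
  have coeff_X_mul_g (i : σ) : coeff d (X i * g i) =
      if d.support.min = (i : WithTop σ) then coeff d f else 0 := by
    rw [X_def, coeff_monomial_mul, one_mul]
    split_ifs with hle hmin hmin
    · rw [coeff_g, tsub_add_cancel_of_le hle, if_pos hmin]
    · rw [coeff_g, tsub_add_cancel_of_le hle, if_neg hmin]
    · exfalso
      refine hle (Finsupp.single_le_iff.mpr ?_)
      have := Finsupp.mem_support_iff.mp (Finset.mem_of_min hmin)
      omega
    · rfl
  obtain ⟨j, hj⟩ := Finset.min_of_nonempty (Finsupp.support_nonempty_iff.mpr hd)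
  simp only [map_add, map_sum, coeff_X_mul_g, hj, WithTop.coe_inj, Finset.sum_ite_eq,
    Finset.mem_univ, if_true, coeff_C, if_neg hd, zero_add]

end Semiring

section Ring

variable [CommRing R] [LinearOrder σ] [Fintype σ]

theorem derivation_mem_orderIdeal (D : Derivation R (MvPowerSeries σ R) (MvPowerSeries σ R))
    {m a : ℕ} (hD : ∀ i, D (X i) ∈ orderIdeal σ R (m + 1)) (hf : f ∈ orderIdeal σ R a) :
    D f ∈ orderIdeal σ R (a + m) := by
  suffices key : ∀ b a (f : MvPowerSeries σ R), b ≤ a + m → f ∈ orderIdeal σ R a →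
      D f ∈ orderIdeal σ R b from key _ a f le_rfl hf
  intro b
  induction b with
  | zero => simp [orderIdeal_zero]
  | succ b ih =>
    intro a f hb hf
    obtain ⟨g, hg, hfg⟩ := exists_eq_C_add_sum_X_mul hf
    rw [hfg, map_add, c_eq_algebraMap, D.map_algebraMap, zero_add, map_sum]
    refine Ideal.sum_mem _ fun i _ => ?_
    rw [D.leibniz, smul_eq_mul, smul_eq_mul]
    refine Ideal.add_mem _ ?_ ?_
    · exact orderIdeal_antitone (by omega)
        (mul_mem_orderIdeal (X_mem_orderIdeal_one i) (ih _ _ (by omega) (hg i)))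
    · exact orderIdeal_antitone (by omega) (mul_mem_orderIdeal (hg i) (hD i))

theorem map_mem_orderIdeal {F : Type*} [FunLike F (MvPowerSeries σ R) (MvPowerSeries σ R)]
    [RingHomClass F (MvPowerSeries σ R) (MvPowerSeries σ R)] (L : F)
    (hL : ∀ i, L (X i) ∈ orderIdeal σ R 1) {a : ℕ} (hf : f ∈ orderIdeal σ R a) :
    L f ∈ orderIdeal σ R a := by
  induction a generalizing f with
  | zero => simp [orderIdeal_zero]
  | succ a ih =>
    obtain ⟨g, hg, hfg⟩ := exists_eq_C_add_sum_X_mul hf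
    have hf0 : constantCoeff f = 0 :=
      mem_orderIdeal_one_iff.mp (orderIdeal_antitone (by omega) hf)
    rw [hfg, hf0, map_zero, zero_add, map_sum, add_comm a 1]
    exact Ideal.sum_mem _ fun i _ => by
      rw [map_mul]; exact mul_mem_orderIdeal (hL i) (ih (hg i))

end Ring

theorem ringEquiv_X_mem_orderIdeal_one [Field R] {F : Type*}
    [EquivLike F (MvPowerSeries σ R) (MvPowerSeries σ R)]
    [RingEquivClass F (MvPowerSeries σ R) (MvPowerSeries σ R)] (L : F) (i : σ) :
    L (X i) ∈ orderIdeal σ R 1 := by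
  rw [mem_orderIdeal_one_iff]
  by_contra h
  have hunit : IsUnit (X i : MvPowerSeries σ R) :=
    (isUnit_map_iff L _).mp (isUnit_iff_constantCoeff.mpr (Ne.isUnit h))
  simpa using isUnit_iff_constantCoeff.mp hunit

end MvPowerSeries

section Jets

variable {n k : ℕ}

abbrev JetIdx (n k : ℕ) := {d : Fin n →₀ ℕ // (d.sum fun _ e => e) ≤ k}

instance (n k : ℕ) : Fintype (JetIdx n k) := (Finsupp.finite_of_degree_le k).fintype

abbrev Jet (n k : ℕ) := JetIdx n k → ℂ

def jet (k : ℕ) : PS n →ₗ[ℂ] Jet n k := LinearMap.pi fun d => coeff d.1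

def jetLift (k : ℕ) : Jet n k →ₗ[ℂ] PS n := Fintype.linearCombination ℂ fun d => monomial d.1 1

theorem jet_apply (f : PS n) (d : JetIdx n k) : jet k f d = coeff d.1 f := rfl

theorem jetLift_apply (v : Jet n k) : jetLift k v = ∑ d, v d • monomial d.1 1 :=
  Fintype.linearCombination_apply ℂ _ v

theorem jet_jetLift (v : Jet n k) : jet k (jetLift k v) = v := by
  classical
  ext d
  rw [jet_apply, jetLift_apply, map_sum, Finset.sum_eq_single d]
  · simp
  · intro e _ hed
    rw [map_smul, coeff_monomial, if_neg fun h => hed (Subtype.ext h).symm, smul_zero]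
  · simp

theorem jet_eq_zero_iff {f : PS n} : jet k f = 0 ↔ f ∈ orderIdeal (Fin n) ℂ (k + 1) := by
  rw [mem_orderIdeal_iff, funext_iff]
  exact ⟨fun h d hd => h ⟨d, Nat.lt_succ_iff.mp hd⟩, fun h d => h d.1 (Nat.lt_succ_of_le d.2)⟩

theorem sub_jetLift_jet_mem_orderIdeal (f : PS n) :
    f - jetLift k (jet k f) ∈ orderIdeal (Fin n) ℂ (k + 1) := by
  rw [← jet_eq_zero_iff, map_sub, jet_jetLift, sub_self]

theorem eq_of_forall_jet_eq {f g : PS n} (h : ∀ k, jet k f = jet k g) : f = g :=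
  ext fun d => congrFun (h d.degree) ⟨d, le_rfl⟩

def jetOp (k : ℕ) : FormalVF n →ₗ[ℂ] Jet n k →L[ℂ] Jet n k where
  toFun D := LinearMap.toContinuousLinearMap (jet k ∘ₗ (D : PS n →ₗ[ℂ] PS n) ∘ₗ jetLift k)
  map_add' D D' := by ext; simp
  map_smul' c D := by ext; simp

theorem jetOp_apply (D : FormalVF n) (v : Jet n k) : jetOp k D v = jet k (D (jetLift k v)) := rfl

theorem IsSingularVF.mem_orderIdeal {D : FormalVF n} (hD : IsSingularVF D) {a : ℕ} {f : PS n}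
    (hf : f ∈ orderIdeal (Fin n) ℂ a) : D f ∈ orderIdeal (Fin n) ℂ a :=
  derivation_mem_orderIdeal (m := 0) D (fun i => mem_orderIdeal_one_iff.mpr (hD i)) hf

theorem jet_derivation {D : FormalVF n} (hD : IsSingularVF D) (f : PS n) :
    jet k (D f) = jetOp k D (jet k f) := by
  rw [jetOp_apply, ← sub_eq_zero, ← map_sub, ← map_sub, jet_eq_zero_iff]
  exact hD.mem_orderIdeal (sub_jetLift_jet_mem_orderIdeal f)

theorem derivPow_succ (D : FormalVF n) (j : ℕ) (f : PS n) :
    derivPow D (j + 1) f = D (derivPow D j f) := by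
  rw [derivPow, pow_succ', Module.End.mul_apply]
  rfl

theorem jet_derivPow {D : FormalVF n} (hD : IsSingularVF D) (j : ℕ) (f : PS n) :
    jet k (derivPow D j f) = (jetOp k D ^ j) (jet k f) := by
  induction j with
  | zero => rfl
  | succ j ih =>
    rw [derivPow_succ, jet_derivation hD, ih, pow_succ']
    rfl

end Jets

namespace NormedSpace

variable {𝔸 : Type*} [NormedRing 𝔸] [CompleteSpace 𝔸]

theorem exp_apply_apply {𝕂 ι : Type*} [RCLike 𝕂] [Fintype ι] (A : (ι → 𝕂) →L[𝕂] (ι → 𝕂))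
    (v : ι → 𝕂) (i : ι) : exp A v i = ∑' j : ℕ, (j.factorial : 𝕂)⁻¹ * (A ^ j) v i := by
  rw [exp_eq_tsum 𝕂]
  exact ((ContinuousLinearMap.proj i).comp (ContinuousLinearMap.apply 𝕂 _ v)).map_tsum
    (expSeries_summable' (𝕂 := 𝕂) A)

theorem commute_of_forall_commute_exp_smul (𝕂 : Type*) [RCLike 𝕂] [NormedAlgebra 𝕂 𝔸]
    {a b : 𝔸} (h : ∀ t : 𝕂, Commute a (exp (t • b))) : Commute a b := by
  have hb := hasDerivAt_exp_smul_const (𝕂 := 𝕂) b 0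
  rw [zero_smul, exp_zero, one_mul] at hb
  have hab := hb.const_mul a
  rw [funext fun t => (h t).eq] at hab
  exact hab.unique (hb.mul_const a)

theorem exp_sub_eq_one_of_exp_eq (𝕂 : Type*) [RCLike 𝕂] [NormedAlgebra 𝕂 𝔸] {a b : 𝔸}
    (hab : Commute a b) (h : exp a = exp b) : exp (a - b) = 1 := by
  have hball (x : 𝔸) : x ∈ Metric.eball (0 : 𝔸) (expSeries 𝕂 𝔸).radius :=
    (expSeries_radius_eq_top 𝕂 𝔸).symm ▸ edist_lt_top _ _
  apply (isUnit_exp_of_mem_ball (hball b)).mul_left_injective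
  show exp (a - b) * exp b = 1 * exp b
  rw [← exp_add_of_commute_of_mem_ball (hab.sub_left (Commute.refl b)) (hball _) (hball _),
    sub_add_cancel, h, one_mul]

theorem pow_mul_exp_of_pow_eq_zero (𝕂 : Type*) [RCLike 𝕂] [NormedAlgebra 𝕂 𝔸] {a : 𝔸} {j : ℕ}
    (h : a ^ (j + 2) = 0) : a ^ j * exp a = a ^ j + a ^ (j + 1) := by
  have hfin : HasSum (fun i => a ^ j * ((i.factorial : 𝕂)⁻¹ • a ^ i))
      (∑ i ∈ Finset.range 2, a ^ j * ((i.factorial : 𝕂)⁻¹ • a ^ i)) := by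
    refine hasSum_sum_of_ne_finset_zero fun i hi => ?_
    rw [Finset.mem_range, not_lt] at hi
    rw [mul_smul_comm, ← pow_add, pow_eq_zero_of_le (by omega) h, smul_zero]
  rw [((exp_series_hasSum_exp' (𝕂 := 𝕂) a).mul_left (a ^ j)).unique hfin]
  simp [Finset.sum_range_succ, pow_succ]

theorem eq_zero_of_isNilpotent_of_exp_eq_one (𝕂 : Type*) [RCLike 𝕂] [NormedAlgebra 𝕂 𝔸]
    {a : 𝔸} (ha : IsNilpotent a) (h : exp a = 1) : a = 0 := by
  obtain ⟨m, hm⟩ := ha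
  suffices ∀ j, a ^ (j + 1) = 0 → a = 0 from this m (by rw [pow_succ, hm, zero_mul])
  intro j
  induction j with
  | zero => simp
  | succ j ih =>
    intro hj
    apply ih
    simpa [h] using pow_mul_exp_of_pow_eq_zero 𝕂 hj

end NormedSpace

/-- The stabilizer `{L | L_* D = D}` of `D` under push-forward. -/
def autCentralizer (R : Type*) {A : Type*} [CommSemiring R] [Semiring A] [Algebra R A] (D : A → A) :
    Subgroup (A ≃ₐ[R] A) where
  carrier := {L | ∀ f, L (D f) = D (L f)}
  mul_mem' {L L'} (hL : ∀ f, L (D f) = D (L f)) (hL' : ∀ f, L' (D f) = D (L' f)) f := by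
    rw [AlgEquiv.mul_apply, AlgEquiv.mul_apply, hL', hL]
  one_mem' _ := rfl
  inv_mem' {L} (hL : ∀ f, L (D f) = D (L f)) f := L.injective <| by
    rw [AlgEquiv.aut_inv, hL, AlgEquiv.apply_symm_apply, AlgEquiv.apply_symm_apply]

section Flows

open NormedSpace

variable {n k : ℕ}

theorem jet_apply_of_isExpOf {G : FormalDiffeo n} {W : FormalVF n} (hG : IsExpOf G W)
    (hW : IsSingularVF W) (g : PS n) : jet k (G g) = exp (jetOp k W) (jet k g) := by
  ext d
  rw [hG g, exp_apply_apply]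
  exact tsum_congr fun j => by rw [← jet_derivPow hW]; rfl

theorem mem_autCentralizer_iff_commute_exp {D W : FormalVF n} {G : FormalDiffeo n}
    (hD : IsSingularVF D) (hW : IsSingularVF W) (hG : IsExpOf G W) :
    G ∈ autCentralizer ℂ ⇑D ↔ ∀ k, Commute (jetOp k D) (exp (jetOp k W)) := by
  have jet_G_D (k : ℕ) (f : PS n) :
      jet k (G (D f)) = (exp (jetOp k W) * jetOp k D) (jet k f) := by
    rw [jet_apply_of_isExpOf hG hW, jet_derivation hD]; rfl
  have jet_D_G (k : ℕ) (f : PS n) :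
      jet k (D (G f)) = (jetOp k D * exp (jetOp k W)) (jet k f) := by
    rw [jet_derivation hD, jet_apply_of_isExpOf hG hW]; rfl
  refine ⟨fun hGD k => ContinuousLinearMap.ext fun v => ?_,
    fun h f => eq_of_forall_jet_eq fun k => ?_⟩
  · rw [← jet_jetLift v, ← jet_D_G, ← hGD, jet_G_D]
  · rw [jet_G_D, jet_D_G, (h k).eq]

theorem IsSingularVF.smul {W : FormalVF n} (hW : IsSingularVF W) (t : ℂ) :
    IsSingularVF (t • W) := fun i => by simp [hW i]

end Flows

def polyFamilies (n k : ℕ) : Subalgebra ℂ (JetSpace n k → PS n) where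
  carrier := {P | ∀ d : JetIdx n k, (fun J => coeff d.1 (P J)) ∈ polyFuns n k}
  mul_mem' {P Q} hP hQ d := by
    have hPQ : (fun J => coeff d.1 ((P * Q) J)) = ∑ p ∈ Finset.HasAntidiagonal.antidiagonal d.1,
        (fun J => coeff p.1 (P J)) * fun J => coeff p.2 (Q J) := by
      ext J; simp [coeff_mul, Finset.sum_apply]
    rw [hPQ]
    refine Subalgebra.sum_mem _ fun p hp => Subalgebra.mul_mem _
      (hP ⟨p.1, le_trans ?_ d.2⟩) (hQ ⟨p.2, le_trans ?_ d.2⟩)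
    · exact Finsupp.degree_mono (Finset.HasAntidiagonal.antidiagonal.fst_le hp)
    · exact Finsupp.degree_mono (Finset.HasAntidiagonal.antidiagonal.snd_le hp)
  add_mem' {P Q} hP hQ d := by
    convert Subalgebra.add_mem _ (hP d) (hQ d) using 1
    ext J; simp
  algebraMap_mem' c d := by
    convert Subalgebra.algebraMap_mem (polyFuns n k) (coeff d.1 (algebraMap ℂ (PS n) c)) using 1
    ext J; rfl

section Polynomiality

variable {n k : ℕ}

theorem smul_const_mem_polyFamilies {φ : JetSpace n k → ℂ} (hφ : φ ∈ polyFuns n k) (Q : PS n) :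
    (fun J => φ J • Q) ∈ polyFamilies n k := fun d => by
  convert Subalgebra.mul_mem _ hφ (Subalgebra.algebraMap_mem (polyFuns n k) (coeff d.1 Q)) using 1
  ext J; simp

theorem jetLift_comp_mem_polyFamilies (i : Fin n) :
    (fun J : JetSpace n k => jetLift k (J i)) ∈ polyFamilies n k := by
  simp_rw [jetLift_apply, ← Finset.sum_fn]
  exact Subalgebra.sum_mem _ fun d _ =>
    smul_const_mem_polyFamilies (Algebra.subset_adjoin ⟨i, d, rfl⟩) _

/-- The truncation of `h`, evaluated at the truncated components `J` of a diffeomorphism: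
`h ∘ J` up to terms of degree `> k`. -/
def evalJet (J : JetSpace n k) (h : PS n) : PS n :=
  ∑ e : JetIdx n k, coeff e.1 h • e.1.prod fun j m => jetLift k (J j) ^ m

theorem evalJet_mem_polyFamilies (h : PS n) :
    (fun J : JetSpace n k => evalJet J h) ∈ polyFamilies n k := by
  have hfun : (fun J : JetSpace n k => evalJet J h) = ∑ e : JetIdx n k,
      coeff e.1 h • e.1.prod fun j m => (fun J : JetSpace n k => jetLift k (J j)) ^ m := by
    ext J : 1
    simp [evalJet, Finset.sum_apply, Finsupp.prod, Finset.prod_apply]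
  rw [hfun]
  exact Subalgebra.sum_mem _ fun e _ => Subalgebra.smul_mem _
    (Subalgebra.prod_mem _ fun j _ => Subalgebra.pow_mem _ (jetLift_comp_mem_polyFamilies j) _) _

theorem apply_jet_mem_polyFuns (T : Jet n k →L[ℂ] Jet n k) {P : JetSpace n k → PS n}
    (hP : P ∈ polyFamilies n k) (d : JetIdx n k) :
    (fun J => T (jet k (P J)) d) ∈ polyFuns n k := by
  classical
  have hfun : (fun J => T (jet k (P J)) d) = ∑ e : JetIdx n k,
      (fun J => coeff e.1 (P J)) * fun _ => T (fun j => if e = j then 1 else 0) d := by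
    ext J
    rw [← ContinuousLinearMap.coe_coe, LinearMap.pi_apply_eq_sum_univ]
    simp [Finset.sum_apply, jet_apply]
  rw [hfun]
  exact Subalgebra.sum_mem _ fun e _ => Subalgebra.mul_mem _ (hP e) (Subalgebra.algebraMap_mem _ _)

theorem jet_algEquiv_apply (L : FormalDiffeo n) (h : PS n) :
    jet k (L h) = jet k (evalJet (jetOf n k L) h) := by
  set I := orderIdeal (Fin n) ℂ (k + 1)
  let π := Ideal.Quotient.mkₐ ℂ I
  have hπ {f g : PS n} : π f = π g ↔ f - g ∈ I := by
    rw [Ideal.Quotient.mkₐ_eq_mk, Ideal.Quotient.eq]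
  have hπ_jet (f : PS n) : π (jetLift k (jet k f)) = π f :=
    hπ.mpr (by rw [← neg_mem_iff, neg_sub]; exact sub_jetLift_jet_mem_orderIdeal f)
  rw [← sub_eq_zero, ← map_sub, jet_eq_zero_iff, ← hπ]
  calc π (L h) = π (L (jetLift k (jet k h))) := by
        rw [hπ, ← map_sub]
        exact map_mem_orderIdeal L (ringEquiv_X_mem_orderIdeal_one L)
          (sub_jetLift_jet_mem_orderIdeal h)
    _ = ∑ e : JetIdx n k, coeff e.1 h • e.1.prod fun j m => π (L (X j)) ^ m := by
        simp [jetLift_apply, monomial_one_eq_prod, jet_apply]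
    _ = π (evalJet (jetOf n k L) h) := by
        simp only [← hπ_jet (L (X _)), evalJet, map_sum, map_smul, map_finsuppProd, map_pow]
        rfl

end Polynomiality

section ProAlgebraic

variable {n : ℕ}

theorem proAlgClosure_mono {S T : Set (FormalDiffeo n)} (h : S ⊆ T) :
    proAlgClosure S ⊆ proAlgClosure T :=
  fun _ hG k => by
    let _ := zTop n k
    exact closure_mono (Set.image_mono h) (hG k)

theorem eq_zero_of_mem_proAlgClosure {k : ℕ} {S : Set (FormalDiffeo n)}
    {φ : JetSpace n k → ℂ} (hφ : φ ∈ polyFuns n k) (hS : ∀ L ∈ S, φ (jetOf n k L) = 0)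
    {G : FormalDiffeo n} (hG : G ∈ proAlgClosure S) : φ (jetOf n k G) = 0 := by
  let _ := zTop n k
  have hclosed : IsClosed {J | φ J = 0} :=
    isOpen_compl_iff.mp (TopologicalSpace.isOpen_generateFrom_of_mem ⟨φ, hφ, rfl⟩)
  have hsub : jetOf n k '' S ⊆ {J | φ J = 0} := Set.image_subset_iff.mpr hS
  exact closure_minimal hsub hclosed (hG k)

theorem proAlgClosure_autCentralizer_subset {D : FormalVF n} (hD : IsSingularVF D) :
    proAlgClosure (autCentralizer ℂ ⇑D : Set (FormalDiffeo n)) ⊆ autCentralizer ℂ ⇑D := by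
  intro G hG f
  refine eq_of_forall_jet_eq fun k => funext fun d => ?_
  let φ : JetSpace n k → ℂ := fun J =>
    coeff d.1 (evalJet J (D f)) - jetOp k D (jet k (evalJet J f)) d
  have hφ : φ ∈ polyFuns n k := Subalgebra.sub_mem _ (evalJet_mem_polyFamilies (D f) d)
    (apply_jet_mem_polyFuns _ (evalJet_mem_polyFamilies f) d)
  have hφ_jetOf (L : FormalDiffeo n) :
      φ (jetOf n k L) = jet k (L (D f)) d - jet k (D (L f)) d := by
    simp only [φ, ← jet_apply, ← jet_algEquiv_apply, jet_derivation hD]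
  have h := eq_zero_of_mem_proAlgClosure hφ (fun L hL => by rw [hφ_jetOf, hL f, sub_self]) hG
  rwa [hφ_jetOf, sub_eq_zero] at h

end ProAlgebraic

section Uniqueness

open NormedSpace

variable {n : ℕ}

theorem isExpOf_mem_autCentralizer {D : FormalVF n} {F : FormalDiffeo n} (hD : IsSingularVF D)
    (hF : IsExpOf F D) : F ∈ autCentralizer ℂ ⇑D :=
  (mem_autCentralizer_iff_commute_exp hD hD hF).mpr fun _ => (Commute.refl _).exp_right

theorem commute_jetOp_of_inLieAlgOf {D W : FormalVF n} {F : FormalDiffeo n}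
    (hD : IsSingularVF D) (hW : IsSingularVF W) (hF : IsExpOf F D)
    (hWF : InLieAlgOf (Subgroup.zpowers F : Set (FormalDiffeo n)) W) (k : ℕ) :
    Commute (jetOp k D) (jetOp k W) := by
  refine commute_of_forall_commute_exp_smul ℂ fun t => ?_
  obtain ⟨G, hG, hGexp⟩ := hWF t
  have hGD : G ∈ autCentralizer ℂ ⇑D := proAlgClosure_autCentralizer_subset hD
    (proAlgClosure_mono (Subgroup.zpowers_le.mpr (isExpOf_mem_autCentralizer hD hF)) hG)
  rw [← map_smul]
  exact (mem_autCentralizer_iff_commute_exp hD (hW.smul t) hGexp).mp hGD k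

theorem isNilpotent_jetOp {Z : FormalVF n} (hZ : ∀ i, Z (X i) ∈ orderIdeal (Fin n) ℂ 2)
    (k : ℕ) : IsNilpotent (jetOp k Z) := by
  have derivPow_mem (j : ℕ) (f : PS n) : derivPow Z j f ∈ orderIdeal (Fin n) ℂ j := by
    induction j with
    | zero => simp [orderIdeal_zero]
    | succ j ih => rw [derivPow_succ]; exact derivation_mem_orderIdeal (m := 1) Z hZ ih
  have hZs : IsSingularVF Z := fun i =>
    mem_orderIdeal_one_iff.mp (orderIdeal_antitone (by omega) (hZ i))
  refine ⟨k + 1, ContinuousLinearMap.ext fun v => ?_⟩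
  rw [zero_apply, ← jet_jetLift v, ← jet_derivPow hZs, jet_eq_zero_iff]
  exact derivPow_mem _ _

theorem sub_apply_X_mem_orderIdeal_two {D W : FormalVF n} (hD : IsSingularVF D)
    (hW : IsSingularVF W) (hlin : linPartV D = linPartV W) (i : Fin n) :
    (D - W) (X i) ∈ orderIdeal (Fin n) ℂ 2 := by
  rw [mem_orderIdeal_iff]
  intro d hd
  rw [Derivation.coe_sub, Pi.sub_apply, map_sub, sub_eq_zero]
  obtain hd0 | hd1 : d.degree = 0 ∨ d.degree = 1 := by omega
  · rw [(Finsupp.degree_eq_zero_iff d).mp hd0, coeff_zero_eq_constantCoeff_apply,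
      coeff_zero_eq_constantCoeff_apply, hD i, hW i]
  · obtain ⟨j, rfl⟩ := (Finsupp.sum_eq_one_iff d).mp hd1
    exact congrFun (congrFun hlin i) j

end Uniqueness

/-- if `Exp(X) = Exp(Y) = F`, `D₀X = D₀Y`, and `Y` belongs to the Lie algebra of
the pro-algebraic closure of `⟨F⟩`, then `X = Y`. -/
theorem infGen_unique_given_linear_part {n : ℕ} (X Y : FormalVF n) (F : FormalDiffeo n)
    (hsingX : IsSingularVF X) (hsingY : IsSingularVF Y)
    (hexpX : IsExpOf F X) (hexpY : IsExpOf F Y)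
    (hlin : linPartV X = linPartV Y)
    (hY : InLieAlgOf (Subgroup.zpowers F : Set (FormalDiffeo n)) Y) :
    X = Y := by
  have hjetOp (k : ℕ) : jetOp k X = jetOp k Y := by
    have hexp : NormedSpace.exp (jetOp k X) = NormedSpace.exp (jetOp k Y) :=
      ContinuousLinearMap.ext fun v => by
        rw [← jet_jetLift v, ← jet_apply_of_isExpOf hexpX hsingX,
          ← jet_apply_of_isExpOf hexpY hsingY]
    rw [← sub_eq_zero, ← map_sub]
    refine NormedSpace.eq_zero_of_isNilpotent_of_exp_eq_one ℂ
      (isNilpotent_jetOp (sub_apply_X_mem_orderIdeal_two hsingX hsingY hlin) k) ?_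
    rw [map_sub]
    exact NormedSpace.exp_sub_eq_one_of_exp_eq ℂ
      (commute_jetOp_of_inLieAlgOf hsingX hsingY hexpX hY k) hexp
  refine Derivation.ext fun f => eq_of_forall_jet_eq fun k => ?_
  rw [jet_derivation hsingX, jet_derivation hsingY, hjetOp]

end
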